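/- arXiv:1012.3819 — 2 statements merged into one kernel-verified Lean document; each statement's English description precedes it below -/
import Mathlib

section
/- Let q be an odd prime power with q ≡ 2 (mod 3), and define f_t = (3/2)t² and g_t = 3t³ for t ∈ GF(q). Then for all distinct t, u ∈ GF(q), the binary quadratic form (x,y) ↦ (t−u)x² + 2(f_t−f_u)xy + (g_t−g_u)y² over GF(q) is anisotropic. -/
/-- The Fisher–Thas–Walker–Kantor–Betten `q`-clan condition: for `q ≡ 2 (mod 3)`,
`f_t = (3/2)t²`, `g_t = 3t³`, the binary form
`(t−u)x² + 2(f_t−f_u)xy + (g_t−g_u)y²` is anisotropic for all distinct `t,u`. -/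
theorem ftwkb_qclan_anisotropic
    (q : ℕ) (hq : Odd q) (hq3 : q % 3 = 2)
    (F : Type*) [Field F] [Fintype F] (hF : Fintype.card F = q) :
    ∀ t u : F, t ≠ u → ∀ x y : F,
      (t - u) * x ^ 2
        + 2 * ((3 / 2 : F) * t ^ 2 - (3 / 2 : F) * u ^ 2) * x * y
        + (3 * t ^ 3 - 3 * u ^ 3) * y ^ 2 = 0 →
      x = 0 ∧ y = 0 := by
  have hqF : ((q : ℕ) : F) = 0 := by rw [← hF]; exact FiniteField.cast_card_eq_zero F
  have hp : (ringChar F).Prime := CharP.char_is_prime F (ringChar F)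
  have hdvdq : ringChar F ∣ q := ringChar.dvd hqF
  have h2 : (2 : F) ≠ 0 := by
    intro h
    have h2' : ringChar F ∣ 2 := ringChar.dvd (by exact_mod_cast h)
    have : ringChar F = 2 := (Nat.prime_dvd_prime_iff_eq hp Nat.prime_two).mp h2'
    rw [this] at hdvdq
    rw [Nat.odd_iff] at hq
    omega
  have h3 : (3 : F) ≠ 0 := by
    intro h
    have h3' : ringChar F ∣ 3 := ringChar.dvd (by exact_mod_cast h)
    have : ringChar F = 3 := (Nat.prime_dvd_prime_iff_eq hp Nat.prime_three).mp h3'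
    rw [this] at hdvdq
    omega
  -- −3 is not a square
  have hns : ∀ s : F, s ^ 2 ≠ -3 := by
    intro s hs
    set ω : F := (-1 + s) / 2 with hω
    have hω3 : ω ^ 3 = 1 := by
      rw [hω]
      field_simp
      linear_combination (s - 3) * hs
    have hω1 : ω ≠ 1 := by
      intro h
      rw [hω, div_eq_one_iff_eq h2] at h
      have hs3 : s = 3 := by linear_combination h
      rw [hs3] at hs
      exact mul_ne_zero (mul_ne_zero h2 h2) h3 (by linear_combination hs)
    have hωne : ω ≠ 0 := by
      intro h; rw [h] at hω3; simp at hω3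
    have hmul : ω * ω ^ 2 = 1 := by rw [← pow_succ']; exact hω3
    have hmul' : ω ^ 2 * ω = 1 := by rw [← pow_succ]; exact hω3
    let υ : Fˣ := ⟨ω, ω ^ 2, hmul, hmul'⟩
    have hu3 : υ ^ 3 = 1 := by ext; push_cast [υ]; exact hω3
    have hu1 : υ ≠ 1 := by
      intro h; apply hω1; exact congrArg Units.val h
    have : Fact (Nat.Prime 3) := ⟨Nat.prime_three⟩
    have hord : orderOf υ = 3 := orderOf_eq_prime hu3 hu1
    have hdvd : orderOf υ ∣ Nat.card Fˣ := orderOf_dvd_natCard υ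
    rw [hord, Nat.card_units, Nat.card_eq_fintype_card, hF] at hdvd
    have hq2 : 2 ≤ q := by
      rw [← hF]; exact Fintype.one_lt_card
    omega
  intro t u htu x y h
  have htu' : t - u ≠ 0 := sub_ne_zero.mpr htu
  have hP : x ^ 2 + 3 * (t + u) * x * y + 3 * (t ^ 2 + t * u + u ^ 2) * y ^ 2 = 0 := by
    apply mul_left_cancel₀ htu'
    rw [mul_zero, ← h]
    field_simp
    ring
  have key : (2 * x + 3 * (t + u) * y) ^ 2 = -3 * ((t - u) * y) ^ 2 := by
    linear_combination 4 * hP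
  have hy : y = 0 := by
    by_contra hy
    have hty : (t - u) * y ≠ 0 := mul_ne_zero htu' hy
    apply hns ((2 * x + 3 * (t + u) * y) / ((t - u) * y))
    rw [div_pow, key]
    field_simp
  subst hy
  refine ⟨?_, rfl⟩
  simp only [mul_zero, zero_pow, add_zero] at h
  have : x ^ 2 = 0 := by
    rcases mul_eq_zero.mp (by linear_combination h : (t - u) * x ^ 2 = 0) with h' | h'
    · exact absurd h' htu'
    · exact h'
  exact pow_eq_zero_iff (by norm_num) |>.mp this
end

section
/- Let q be an odd prime power with q ≡ ±1 (mod 10), fix β, γ ∈ GF(q^2) with β^{q+1} = −4/5 and γ^{q+1} = −1/5, and let P = {(βx², γx³, 1) : x ∈ GF(q^2), x^{q+1} = 1}. Then P is a set of q+1 singular points of the quadratic form Q(x,y,a) = x^{q+1} + y^{q+1} + a² on GF(q^2) ⊕ GF(q^2) ⊕ GF(q); that is, |P| = q+1 and Q(v) = 0 for every v ∈ P. -/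
/-!
The norm-one elements `x^(q+1) = 1` form the subgroup of order `q + 1` of the cyclic group `Kˣ`
of order `q² - 1`, and `x ↦ (βx², γx³, 1)` is injective on them because `x = x³ / x²`. Every
image point is singular since `(βx²)^(q+1) + (γx³)^(q+1) + 1 = -4/5 - 1/5 + 1 = 0`; the
congruence `q ≡ ±1 (mod 10)` makes `2` and `5` invertible in `K`, so `β, γ ≠ 0`.
-/

theorem Nat.Coprime.natCast_ne_zero {R : Type*} [CommRing R] [Nontrivial R] {m n : ℕ}
    (h : m.Coprime n) (hn : (n : R) = 0) : (m : R) ≠ 0 := by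
  intro hm
  obtain ⟨a, b, hab⟩ := Nat.isCoprime_iff_coprime.mpr h
  have := congrArg (Int.cast : ℤ → R) hab
  push_cast [hm, hn] at this
  simp at this

theorem FiniteField.exists_isPrimitiveRoot_of_dvd {K : Type*} [Field K] [Fintype K] {n : ℕ}
    (hn : n ∣ Fintype.card K - 1) : ∃ ζ : K, IsPrimitiveRoot ζ n := by
  classical
  obtain ⟨g, hg⟩ := IsCyclic.exists_ofOrder_eq_natCard (α := Kˣ)
  rw [Nat.card_eq_fintype_card, Fintype.card_units] at hg
  have hgen : IsPrimitiveRoot (g : K) (Fintype.card K - 1) :=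
    IsPrimitiveRoot.coe_units_iff.mpr (hg ▸ IsPrimitiveRoot.orderOf g)
  obtain ⟨m, hm⟩ := hn
  have hm0 : m ≠ 0 := right_ne_zero_of_mul (hm ▸ Nat.sub_ne_zero_of_lt Fintype.one_lt_card)
  refine ⟨(g : K) ^ m, ?_⟩
  simpa [hm, hm0] using hgen.pow_of_dvd hm0 (hm ▸ dvd_mul_left m n)

theorem FiniteField.ncard_setOf_pow_eq_one {K : Type*} [Field K] [Fintype K] {n : ℕ}
    (hn : n ∣ Fintype.card K - 1) : {x : K | x ^ n = 1}.ncard = n := by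
  obtain ⟨ζ, hζ⟩ := FiniteField.exists_isPrimitiveRoot_of_dvd hn
  have hn0 : 0 < n := Nat.pos_of_ne_zero <|
    ne_zero_of_dvd_ne_zero (Nat.sub_ne_zero_of_lt Fintype.one_lt_card) hn
  have hset : {x : K | x ^ n = 1} = ↑(Polynomial.nthRootsFinset n (1 : K)) := by
    ext x
    simp [Polynomial.mem_nthRootsFinset hn0]
  rw [hset, Set.ncard_coe_finset, hζ.card_nthRootsFinset]

theorem eq_of_sq_eq_of_pow_three_eq {M₀ : Type*} [MonoidWithZero M₀] [IsLeftCancelMulZero M₀]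
    {x y : M₀} (h2 : x ^ 2 = y ^ 2) (h3 : x ^ 3 = y ^ 3) : x = y := by
  by_cases hx : x = 0
  · rw [hx, zero_pow two_ne_zero, eq_comm, pow_eq_zero_iff two_ne_zero] at h2
    rw [hx, h2]
  · refine mul_left_cancel₀ (pow_ne_zero 2 hx) ?_
    calc x ^ 2 * x = y ^ 3 := by rw [← pow_succ, h3]
      _ = x ^ 2 * y := by rw [h2, pow_succ]

theorem mul_pow_pow_eq_pow_of_pow_eq_one {M : Type*} [CommMonoid M] {a x : M} {n : ℕ}
    (k : ℕ) (hx : x ^ n = 1) : (a * x ^ k) ^ n = a ^ n := by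
  rw [mul_pow, ← pow_mul, mul_comm k n, pow_mul, hx, one_pow, mul_one]

theorem penttila_mondello_blt_points_general
    (q : ℕ) (hq10 : q % 10 = 1 ∨ q % 10 = 9)
    (F K : Type*) [Field F] [Field K] [Fintype K] [Algebra F K]
    (hK : Fintype.card K = q ^ 2)
    (Q : K × K × F → K)
    (hQ : ∀ v : K × K × F,
      Q v = v.1 ^ (q + 1) + v.2.1 ^ (q + 1) + (algebraMap F K v.2.2) ^ 2)
    (β γ : K) (hβ : β ^ (q + 1) = -(4 / 5 : K)) (hγ : γ ^ (q + 1) = -(1 / 5 : K))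
    (P : Set (K × K × F))
    (hP : P = {v | ∃ x : K, x ^ (q + 1) = 1 ∧ v = (β * x ^ 2, γ * x ^ 3, 1)}) :
    P.ncard = q + 1 ∧ ∀ v ∈ P, Q v = 0 := by
  have hq0 : (q : K) = 0 := pow_eq_zero_iff two_ne_zero |>.mp <| by
    exact_mod_cast hK ▸ FiniteField.cast_card_eq_zero K
  have h4 : (4 : K) ≠ 0 := by
    have h2q : Nat.Coprime 2 q := (Nat.Prime.coprime_iff_not_dvd Nat.prime_two).2 (by omega)
    exact_mod_cast (h2q.pow_left 2).natCast_ne_zero hq0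
  have h5 : (5 : K) ≠ 0 := by
    have h5q : Nat.Coprime 5 q := (Nat.Prime.coprime_iff_not_dvd (by norm_num)).2 (by omega)
    exact_mod_cast h5q.natCast_ne_zero hq0
  have hβ0 : β ≠ 0 := by rintro rfl; simp [h4, h5] at hβ
  have hγ0 : γ ≠ 0 := by rintro rfl; simp [h5] at hγ
  have hPimage : P = (fun x : K => (β * x ^ 2, γ * x ^ 3, (1 : F))) '' {x | x ^ (q + 1) = 1} := by
    rw [hP]; ext v; simp [eq_comm]
  refine ⟨?_, ?_⟩
  · rw [hPimage, Set.InjOn.ncard_image, FiniteField.ncard_setOf_pow_eq_one]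
    · exact hK ▸ Dvd.intro (q - 1) (by simpa using (Nat.sq_sub_sq q 1).symm)
    · intro x _ y _ h
      exact eq_of_sq_eq_of_pow_three_eq (mul_left_cancel₀ hβ0 (congrArg Prod.fst h))
        (mul_left_cancel₀ hγ0 (congrArg (·.2.1) h))
  · rw [hPimage]
    rintro _ ⟨x, hx, rfl⟩
    rw [hQ]
    simp only [map_one, one_pow]
    rw [mul_pow_pow_eq_pow_of_pow_eq_one 2 hx, mul_pow_pow_eq_pow_of_pow_eq_one 3 hx, hβ, hγ]
    field_simp
    norm_num

/-- The Penttila–Mondello set `P = {(βx², γx³, 1) : x^{q+1} = 1}` (where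
`β^{q+1} = −4/5`, `γ^{q+1} = −1/5`, `q ≡ ±1 (mod 10)`) consists of `q+1`
singular points of the quadratic form `Q(x,y,a) = x^{q+1} + y^{q+1} + a²`. -/
theorem penttila_mondello_blt_points
    (q : ℕ) (hq : Odd q) (hq10 : q % 10 = 1 ∨ q % 10 = 9)
    (F K : Type*) [Field F] [Field K] [Fintype F] [Fintype K] [Algebra F K]
    (hF : Fintype.card F = q) (hK : Fintype.card K = q ^ 2)
    (Q : K × K × F → K)
    (hQ : ∀ v : K × K × F,
      Q v = v.1 ^ (q + 1) + v.2.1 ^ (q + 1) + (algebraMap F K v.2.2) ^ 2)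
    (β γ : K) (hβ : β ^ (q + 1) = -(4 / 5 : K)) (hγ : γ ^ (q + 1) = -(1 / 5 : K))
    (P : Set (K × K × F))
    (hP : P = {v | ∃ x : K, x ^ (q + 1) = 1 ∧ v = (β * x ^ 2, γ * x ^ 3, 1)}) :
    P.ncard = q + 1 ∧ ∀ v ∈ P, Q v = 0 :=
  penttila_mondello_blt_points_general q hq10 F K hK Q hQ β γ hβ hγ P hP
end
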